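/- Let d ≥ 1 be an integer, let V be a finite nonempty subset of ℤ^d (with the Euclidean norm ‖·‖ on ℝ^d), let n ≥ 2, and let in : Fin n → V be injective. Let R : V × V → ℂ be a unitary matrix satisfying the zero-velocity (Anderson-localization) promise |R(j,k)| ≤ exp(−‖j − k‖/ξ) for all j,k ∈ V, where ξ > 0. Assume in(i) − in(i') ∈ (2L)·ℤ^d for all i, i', where L > 0. Then there exist constants C > 0 and L₀ > 0 depending only on d and ξ such that, if L ≥ L₀ and n·L^{d−1}·exp(−L/ξ) ≤ 1, then (1/(2·n!)) · Σ_{out : Fin n → V} | |Σ_{σ ∈ Perm(Fin n)} Π_{i=1}^{n} R(in(i), out(σ(i)))|² − Σ_{σ ∈ Perm(Fin n)} Π_{i=1}^{n} |R(in(i), out(σ(i)))|² | ≤ C · n² · L^{2(d−1)} · exp(−2L/ξ). -/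

import Mathlib

open scoped BigOperators

/-- Euclidean norm of a point of the integer lattice `ℤ^d`. -/
noncomputable def euclNormZ {d : ℕ} (x : Fin d → ℤ) : ℝ :=
  Real.sqrt (∑ a, ((x a : ℝ)) ^ 2)

/-!
Write `P_σ = ∏ᵢ R(in i, out (σ i))`. Expanding `|∑_σ P_σ|²`, the deviation for one output is at
most `∑_{σ ≠ τ} |P_σ| |P_τ|`, and summing over all outputs factorises each such term into
`∏ᵢ E(i, (τ⁻¹σ) i)`, where `E(i, j) = ∑_v |R(in i, v)| |R(in j, v)|` is the overlap of two rows of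
`|R|`. The total is therefore `n! ∑_{π ≠ 1} ∏ᵢ E(i, π i)`. Unitarity gives `E(i, i) = 1`, and a
permutation `π ≠ 1` moves at least two points, so this sum is at most `T² e^T` with
`T = ∑_{i ≠ j} E(i, j)`.

Localisation gives `E(i, j) ≲ exp (-‖in i - in j‖ / 2ξ)`: half of the decay is spent on the
triangle inequality and the other half makes the sum over `v` converge. The inputs sit on the
lattice `2Lℤ^d`, so each row sum `∑_{j ≠ i} E(i, j)` is `O(e^{-L/ξ})`, with a constant given by a
convergent lattice sum. Hence `T = O(n e^{-L/ξ})`, which is `O(1)` by the hypothesis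
`n L^{d-1} e^{-L/ξ} ≤ 1`, and the bound `T² e^T / 2 = O(n² e^{-2L/ξ})` follows.
-/

open Finset Real

lemma summable_exp_abs_int_mul {a : ℝ} (ha : a < 0) :
    Summable fun m : ℤ => exp (|(m : ℝ)| * a) := by
  have h := Real.summable_exp_nat_mul_iff.mpr ha
  exact .of_nat_of_neg (by simpa using h) (by simpa using h)

lemma summable_pi_prod_of_nonneg {ι κ : Type*} [Fintype ι] {g : κ → ℝ} (hg0 : 0 ≤ g)
    (hg : Summable g) : Summable fun x : ι → κ => ∏ a, g (x a) := by
  classical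
  refine summable_of_sum_le (c := ∏ _a : ι, ∑' m, g m)
    (fun x => prod_nonneg fun a _ => hg0 _) fun u => ?_
  calc ∑ x ∈ u, ∏ a, g (x a)
      ≤ ∑ x ∈ Fintype.piFinset fun a => u.image (· a), ∏ a, g (x a) :=
        sum_le_sum_of_subset_of_nonneg
          (fun x hx => Fintype.mem_piFinset.mpr fun a => mem_image_of_mem _ hx)
          fun x _ _ => prod_nonneg fun a _ => hg0 _
    _ = ∏ a, ∑ m ∈ u.image (· a), g m := (prod_univ_sum _ _).symm
    _ ≤ ∏ _a : ι, ∑' m, g m :=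
        prod_le_prod (fun a _ => sum_nonneg fun m _ => hg0 m)
          fun a _ => hg.sum_le_tsum _ fun m _ => hg0 m

lemma sum_le_sum_sum_of_forall_exists_mem {α ι : Type*} [DecidableEq α] {s : Finset α}
    {t : Finset ι} {u : ι → Finset α} {f : α → ℝ} (hf : ∀ a, 0 ≤ f a)
    (hs : ∀ a ∈ s, ∃ i ∈ t, a ∈ u i) : ∑ a ∈ s, f a ≤ ∑ i ∈ t, ∑ a ∈ u i, f a := by
  calc ∑ a ∈ s, f a ≤ ∑ a ∈ (t.sigma u).image Sigma.snd, f a := by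
        refine sum_le_sum_of_subset_of_nonneg (fun a ha => ?_) fun a _ _ => hf a
        obtain ⟨i, hi, hai⟩ := hs a ha
        exact mem_image.mpr ⟨⟨i, a⟩, mem_sigma.mpr ⟨hi, hai⟩, rfl⟩
    _ ≤ ∑ x ∈ t.sigma u, f x.2 := sum_image_le_of_nonneg fun a _ => hf a
    _ = ∑ i ∈ t, ∑ a ∈ u i, f a := sum_sigma _ _ _

section Lattice

variable {d : ℕ}

lemma euclNormZ_eq_norm (x : Fin d → ℤ) :
    euclNormZ x = ‖(WithLp.toLp 2 fun a => (x a : ℝ) : EuclideanSpace ℝ (Fin d))‖ := by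
  simp [euclNormZ, EuclideanSpace.norm_eq]

lemma euclNormZ_nonneg (x : Fin d → ℤ) : 0 ≤ euclNormZ x := Real.sqrt_nonneg _

lemma abs_le_euclNormZ (x : Fin d → ℤ) (a : Fin d) : |(x a : ℝ)| ≤ euclNormZ x := by
  simpa [euclNormZ_eq_norm] using
    PiLp.norm_apply_le (WithLp.toLp 2 fun a => (x a : ℝ) : EuclideanSpace ℝ (Fin d)) a

lemma one_le_euclNormZ {x : Fin d → ℤ} (hx : x ≠ 0) : 1 ≤ euclNormZ x := by
  obtain ⟨a, ha⟩ := Function.ne_iff.mp hx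
  calc (1 : ℝ) ≤ |(x a : ℝ)| := by exact_mod_cast Int.one_le_abs ha
    _ ≤ euclNormZ x := abs_le_euclNormZ x a

lemma euclNormZ_sub_le (p q v : Fin d → ℤ) :
    euclNormZ (p - q) ≤ euclNormZ (p - v) + euclNormZ (q - v) := by
  simp only [euclNormZ_eq_norm]
  have h : (WithLp.toLp 2 fun a => ((p - q) a : ℝ) : EuclideanSpace ℝ (Fin d)) =
      (WithLp.toLp 2 fun a => ((p - v) a : ℝ)) - WithLp.toLp 2 fun a => ((q - v) a : ℝ) := by
    ext a
    simp
  rw [h]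
  exact norm_sub_le _ _

lemma euclNormZ_eq_mul_of_forall_eq_mul {y x : Fin d → ℤ} {s : ℝ} (hs : 0 ≤ s)
    (h : ∀ a, (y a : ℝ) = s * x a) : euclNormZ y = s * euclNormZ x := by
  have hv : (WithLp.toLp 2 fun a => (y a : ℝ) : EuclideanSpace ℝ (Fin d)) =
      s • WithLp.toLp 2 fun a => (x a : ℝ) := by
    ext a
    simp [h]
  rw [euclNormZ_eq_norm, euclNormZ_eq_norm, hv, norm_smul, Real.norm_of_nonneg hs]

lemma summable_exp_neg_mul_euclNormZ {c : ℝ} (hc : 0 < c) :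
    Summable fun x : Fin d → ℤ => exp (-(c * euclNormZ x)) := by
  -- dividing by `d + 1` rather than `d` spares a separate case `d = 0`
  have hk : -(c / (d + 1)) < 0 := neg_neg_of_pos (by positivity)
  refine (summable_pi_prod_of_nonneg (ι := Fin d) (fun m => (exp_pos _).le)
    (summable_exp_abs_int_mul hk)).of_nonneg_of_le (fun x => (exp_pos _).le) fun x => ?_
  rw [← exp_sum, exp_le_exp, ← sum_mul]
  have hsum : ∑ a, |(x a : ℝ)| ≤ d * euclNormZ x := by
    simpa using sum_le_sum fun a (_ : a ∈ univ) => abs_le_euclNormZ x a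
  have hd : (d : ℝ) / (d + 1) ≤ 1 := div_le_one_of_le₀ (by linarith) (by positivity)
  calc -(c * euclNormZ x) ≤ -(c * ((d / (d + 1)) * euclNormZ x)) := by
        gcongr
        exact mul_le_of_le_one_left (euclNormZ_nonneg x) hd
    _ = -(c / (d + 1)) * (d * euclNormZ x) := by ring
    _ ≤ (∑ a, |(x a : ℝ)|) * -(c / (d + 1)) := by
        rw [mul_comm]
        exact mul_le_mul_of_nonpos_right hsum hk.le

variable (d) in
noncomputable def expLatticeSum (c : ℝ) : ℝ :=
  ∑' x : Fin d → ℤ, exp (-(c * euclNormZ x))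

lemma expLatticeSum_pos {c : ℝ} (hc : 0 < c) : 0 < expLatticeSum d c :=
  (summable_exp_neg_mul_euclNormZ hc).tsum_pos (fun _ => (exp_pos _).le) 0 (exp_pos _)

lemma sum_exp_neg_mul_euclNormZ_le {c : ℝ} (hc : 0 < c) (W : Finset (Fin d → ℤ)) :
    ∑ x ∈ W, exp (-(c * euclNormZ x)) ≤ expLatticeSum d c :=
  (summable_exp_neg_mul_euclNormZ hc).sum_le_tsum _ fun _ _ => (exp_pos _).le

lemma sum_exp_neg_mul_mul_euclNormZ_le {c s : ℝ} (hc : 0 < c) (hs : 1 ≤ s)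
    {W : Finset (Fin d → ℤ)} (hW : 0 ∉ W) :
    ∑ z ∈ W, exp (-(c * (s * euclNormZ z))) ≤
      exp (-(c * s)) * (exp c * expLatticeSum d c) := by
  calc ∑ z ∈ W, exp (-(c * (s * euclNormZ z)))
      ≤ ∑ z ∈ W, exp (-(c * s)) * (exp c * exp (-(c * euclNormZ z))) :=
        sum_le_sum fun z hz => by
          have hz1 := one_le_euclNormZ (ne_of_mem_of_not_mem hz hW)
          rw [← exp_add, ← exp_add, exp_le_exp]
          nlinarith [mul_nonneg (mul_nonneg hc.le (sub_nonneg.mpr hs)) (sub_nonneg.mpr hz1)]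
    _ = exp (-(c * s)) * (exp c * ∑ z ∈ W, exp (-(c * euclNormZ z))) := by
        rw [mul_sum, mul_sum]
    _ ≤ exp (-(c * s)) * (exp c * expLatticeSum d c) := by
        gcongr
        exact sum_exp_neg_mul_euclNormZ_le hc W

lemma sum_exp_neg_mul_euclNormZ_sub_le {ι : Type*} {c t : ℝ} (hc : 0 < c) (ht : 1 ≤ t)
    (p : Fin d → ℤ) (s : Finset ι) (q : ι → Fin d → ℤ) (hq : Set.InjOn q s)
    (hqp : ∀ j ∈ s, q j ≠ p)
    (hlat : ∀ j ∈ s, ∃ x : Fin d → ℤ, ∀ a, (p a : ℝ) - q j a = t * x a) :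
    ∑ j ∈ s, exp (-(c * euclNormZ (p - q j))) ≤
      exp (-(c * t)) * (exp c * expLatticeSum d c) := by
  choose! z hz using hlat
  have hq_eq : ∀ j ∈ s, ∀ a, (q j a : ℝ) = p a - t * z j a := fun j hj a => by
    linarith [hz j hj a]
  have hzinj : Set.InjOn z s := fun j hj j' hj' h =>
    hq hj hj' <| funext fun a => Int.cast_injective (α := ℝ) <| by
      rw [hq_eq j hj, hq_eq j' hj', h]
  have hz0 : 0 ∉ s.image z := by
    simp only [mem_image, not_exists, not_and]
    refine fun j hj h => hqp j hj <| funext fun a => Int.cast_injective (α := ℝ) ?_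
    rw [hq_eq j hj, h]
    simp
  calc ∑ j ∈ s, exp (-(c * euclNormZ (p - q j)))
      = ∑ w ∈ s.image z, exp (-(c * (t * euclNormZ w))) := by
        rw [sum_image hzinj]
        refine sum_congr rfl fun j hj => ?_
        rw [euclNormZ_eq_mul_of_forall_eq_mul (x := z j) (by linarith) fun a => by
          simpa using hz j hj a]
    _ ≤ _ := sum_exp_neg_mul_mul_euclNormZ_le hc ht hz0

lemma sum_exp_mul_exp_le {c : ℝ} (hc : 0 < c) (S : Finset (Fin d → ℤ)) (p q : Fin d → ℤ) :
    ∑ v ∈ S, exp (-(c * euclNormZ (p - v))) * exp (-(c * euclNormZ (q - v))) ≤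
      exp (-(c / 2 * euclNormZ (p - q))) * expLatticeSum d (c / 2) := by
  calc ∑ v ∈ S, exp (-(c * euclNormZ (p - v))) * exp (-(c * euclNormZ (q - v)))
      ≤ ∑ v ∈ S, exp (-(c / 2 * euclNormZ (p - q))) * exp (-(c / 2 * euclNormZ (p - v))) :=
        sum_le_sum fun v _ => by
          have := euclNormZ_sub_le p q v
          have := euclNormZ_nonneg (q - v)
          rw [← exp_add, ← exp_add, exp_le_exp]
          nlinarith
    _ = exp (-(c / 2 * euclNormZ (p - q))) *
          ∑ w ∈ S.image (p - ·), exp (-(c / 2 * euclNormZ w)) := by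
        rw [mul_sum, sum_image fun _ _ _ _ h => sub_right_injective h]
    _ ≤ _ := by
        gcongr
        exact sum_exp_neg_mul_euclNormZ_le (by positivity) _

end Lattice

lemma sum_sum_erase_inv_mul {G M : Type*} [Group G] [Fintype G] [DecidableEq G]
    [AddCommGroup M] (F : G → M) :
    ∑ σ, ∑ τ ∈ univ.erase σ, F (τ⁻¹ * σ) = Fintype.card G • ∑ ρ ∈ univ.erase 1, F ρ := by
  have h : ∀ σ : G, ∑ τ ∈ univ.erase σ, F (τ⁻¹ * σ) = ∑ ρ ∈ univ.erase 1, F ρ := fun σ => by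
    rw [sum_erase_eq_sub (mem_univ _), sum_erase_eq_sub (mem_univ _), inv_mul_cancel]
    congr 1
    exact Fintype.sum_equiv ((Equiv.inv G).trans (Equiv.mulRight σ)) _ _ fun τ => rfl
  simp only [h, sum_const, card_univ]

lemma exists_ne_apply_ne_apply_ne {ι : Type*} {ρ : Equiv.Perm ι} (hρ : ρ ≠ 1) :
    ∃ i j, i ≠ j ∧ ρ i ≠ i ∧ ρ j ≠ j := by
  obtain ⟨i, hi⟩ : ∃ i, ρ i ≠ i := by
    by_contra! h
    exact hρ (Equiv.ext h)
  exact ⟨i, ρ i, hi.symm, hi, fun h => hi (ρ.injective h)⟩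

section Permanent

variable {ι β : Type*} [Fintype ι] [DecidableEq ι]

lemma abs_norm_sum_sq_sub_sum_norm_sq_le {E : Type*} [NormedAddCommGroup E]
    [InnerProductSpace ℝ E] (x : ι → E) :
    |‖∑ i, x i‖ ^ 2 - ∑ i, ‖x i‖ ^ 2| ≤ ∑ i, ∑ j ∈ univ.erase i, ‖x i‖ * ‖x j‖ := by
  have h : ‖∑ i, x i‖ ^ 2 - ∑ i, ‖x i‖ ^ 2 = ∑ i, ∑ j ∈ univ.erase i, inner ℝ (x i) (x j) := by
    rw [← real_inner_self_eq_norm_sq, sum_inner, ← sum_sub_distrib]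
    refine sum_congr rfl fun i _ => ?_
    rw [inner_sum, ← add_sum_erase _ _ (mem_univ i), real_inner_self_eq_norm_sq,
      add_sub_cancel_left]
  rw [h]
  exact (abs_sum_le_sum_abs _ _).trans <| sum_le_sum fun i _ =>
    (abs_sum_le_sum_abs _ _).trans <| sum_le_sum fun j _ => abs_real_inner_le_norm _ _

lemma sum_prod_perm_mul_prod_perm {R : Type*} [CommSemiring R] [Fintype β] (A : ι → β → R)
    (σ τ : Equiv.Perm ι) :
    ∑ out : ι → β, (∏ i, A i (out (σ i))) * ∏ i, A i (out (τ i)) =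
      ∏ i, ∑ v, A i v * A ((τ⁻¹ * σ) i) v := by
  have hτ : ∀ out : ι → β, ∏ i, A i (out (τ i)) = ∏ i, A ((τ⁻¹ * σ) i) (out (σ i)) := fun out =>
    (Equiv.prod_comp (τ⁻¹ * σ) fun i => A i (out (τ i))).symm.trans <| by simp
  simp_rw [hτ, ← prod_mul_distrib]
  rw [← Equiv.prod_comp σ.symm, Fintype.prod_sum]
  refine sum_congr rfl fun out _ => ?_
  rw [← Equiv.prod_comp σ.symm]
  simp

noncomputable def overlap {E : Type*} [SeminormedAddGroup E] [Fintype β] (A : ι → β → E)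
    (i j : ι) : ℝ :=
  ∑ v, ‖A i v‖ * ‖A j v‖

lemma sum_abs_norm_sum_perm_sq_sub_le [Fintype β] (A : ι → β → ℂ) :
    ∑ out : ι → β, |‖∑ σ : Equiv.Perm ι, ∏ i, A i (out (σ i))‖ ^ 2
        - ∑ σ : Equiv.Perm ι, ∏ i, ‖A i (out (σ i))‖ ^ 2|
      ≤ (Fintype.card ι).factorial *
          ∑ ρ ∈ univ.erase (1 : Equiv.Perm ι), ∏ i, overlap A i (ρ i) := by
  calc _ ≤ ∑ out : ι → β, ∑ σ : Equiv.Perm ι, ∑ τ ∈ univ.erase σ,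
          (∏ i, ‖A i (out (σ i))‖) * ∏ i, ‖A i (out (τ i))‖ :=
        sum_le_sum fun out _ => by
          simpa only [norm_prod, prod_pow] using
            abs_norm_sum_sq_sub_sum_norm_sq_le fun σ : Equiv.Perm ι => ∏ i, A i (out (σ i))
    _ = ∑ σ : Equiv.Perm ι, ∑ τ ∈ univ.erase σ, ∏ i, overlap A i ((τ⁻¹ * σ) i) := by
        rw [sum_comm]
        refine sum_congr rfl fun σ _ => ?_
        rw [sum_comm]
        exact sum_congr rfl fun τ _ => sum_prod_perm_mul_prod_perm (fun i v => ‖A i v‖) σ τ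
    _ = _ := by
        rw [sum_sum_erase_inv_mul fun ρ : Equiv.Perm ι => ∏ i, overlap A i (ρ i),
          Fintype.card_perm, nsmul_eq_mul]

def movesBoth (i j : ι) : Finset (ι → ι) :=
  Fintype.piFinset fun k => if k = i ∨ k = j then univ.erase k else univ

lemma sum_prod_movesBoth_le {E : ι → ι → ℝ} (hE : ∀ i j, 0 ≤ E i j) (hdiag : ∀ i, E i i = 1)
    {i j : ι} (hij : i ≠ j) :
    ∑ f ∈ movesBoth i j, ∏ k, E k (f k) ≤
      (∑ l ∈ univ.erase i, E i l) * (∑ l ∈ univ.erase j, E j l) *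
        exp (∑ k, ∑ l ∈ univ.erase k, E k l) := by
  set r : ι → ℝ := fun k => ∑ l ∈ univ.erase k, E k l
  have hr : ∀ k, 0 ≤ r k := fun k => sum_nonneg fun l _ => hE k l
  have hrow : ∀ k, ∑ l, E k l = 1 + r k := fun k => by
    rw [← add_sum_erase _ _ (mem_univ k), hdiag]
  have hj : j ∈ univ.erase i := mem_erase.mpr ⟨hij.symm, mem_univ j⟩
  rw [movesBoth, ← prod_univ_sum, ← mul_prod_erase _ _ (mem_univ i), ← mul_prod_erase _ _ hj,
    ← mul_assoc]
  simp only [true_or, or_true, if_true]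
  gcongr
  · exact mul_nonneg (hr i) (hr j)
  calc ∏ k ∈ (univ.erase i).erase j, ∑ l ∈ (if k = i ∨ k = j then univ.erase k else univ), E k l
      = ∏ k ∈ (univ.erase i).erase j, (1 + r k) := prod_congr rfl fun k hk => by
        obtain ⟨hkj, hki⟩ : k ≠ j ∧ k ≠ i := by simpa using hk
        simp [hki, hkj, hrow]
    _ ≤ exp (∑ k ∈ (univ.erase i).erase j, r k) := prod_one_add_le_exp_sum _ hr
    _ ≤ exp (∑ k, r k) := exp_le_exp.mpr <| sum_le_sum_of_subset_of_nonneg (subset_univ _)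
        fun k _ _ => hr k

lemma sum_prod_perm_ne_one_le {E : ι → ι → ℝ} (hE : ∀ i j, 0 ≤ E i j) (hdiag : ∀ i, E i i = 1) :
    ∑ ρ ∈ univ.erase (1 : Equiv.Perm ι), ∏ i, E i (ρ i) ≤
      (∑ i, ∑ j ∈ univ.erase i, E i j) ^ 2 * exp (∑ i, ∑ j ∈ univ.erase i, E i j) := by
  set r : ι → ℝ := fun k => ∑ l ∈ univ.erase k, E k l
  set T := ∑ k, r k
  have hr : ∀ k, 0 ≤ r k := fun k => sum_nonneg fun l _ => hE k l
  calc ∑ ρ ∈ univ.erase (1 : Equiv.Perm ι), ∏ i, E i (ρ i)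
      = ∑ f ∈ (univ.erase (1 : Equiv.Perm ι)).image fun ρ : Equiv.Perm ι => (ρ : ι → ι),
          ∏ k, E k (f k) := by
        rw [sum_image fun _ _ _ _ h => Equiv.coe_fn_injective h]
    _ ≤ ∑ p ∈ (univ : Finset ι).offDiag, ∑ f ∈ movesBoth p.1 p.2, ∏ k, E k (f k) := by
        refine sum_le_sum_sum_of_forall_exists_mem (fun f => prod_nonneg fun k _ => hE k (f k))
          fun f hf => ?_
        obtain ⟨ρ, hρ, rfl⟩ := mem_image.mp hf
        obtain ⟨i, j, hij, hi, hj⟩ := exists_ne_apply_ne_apply_ne (ne_of_mem_erase hρ)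
        refine ⟨(i, j), by simpa using hij, Fintype.mem_piFinset.mpr fun k => ?_⟩
        split_ifs with hk
        · rcases hk with rfl | rfl <;> simpa
        · exact mem_univ _
    _ ≤ ∑ p ∈ (univ : Finset ι).offDiag, r p.1 * r p.2 * exp T :=
        sum_le_sum fun p hp => sum_prod_movesBoth_le hE hdiag (mem_offDiag.mp hp).2.2
    _ ≤ ∑ p : ι × ι, r p.1 * r p.2 * exp T :=
        sum_le_sum_of_subset_of_nonneg (subset_univ _) fun p _ _ =>
          mul_nonneg (mul_nonneg (hr _) (hr _)) (exp_pos _).le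
    _ = T ^ 2 * exp T := by
        rw [← sum_mul, Fintype.sum_prod_type, ← sum_mul_sum, sq]

end Permanent

lemma sum_norm_sq_eq_one_of_mem_unitaryGroup {n 𝕜 : Type*} [Fintype n] [DecidableEq n] [RCLike 𝕜]
    {U : Matrix n n 𝕜} (hU : U ∈ Matrix.unitaryGroup n 𝕜) (i : n) : ∑ v, ‖U i v‖ ^ 2 = 1 := by
  have h := congr_fun (congr_fun (Matrix.mem_unitaryGroup_iff.mp hU) i) i
  simp only [Matrix.mul_apply, Matrix.star_apply, Matrix.one_apply_eq, RCLike.star_def,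
    RCLike.mul_conj] at h
  exact_mod_cast h

lemma overlap_nonneg {ι β E : Type*} [SeminormedAddGroup E] [Fintype β] (A : ι → β → E) (i j : ι) :
    0 ≤ overlap A i j :=
  sum_nonneg fun _ _ => mul_nonneg (norm_nonneg _) (norm_nonneg _)

lemma overlap_self_of_mem_unitaryGroup {ι n 𝕜 : Type*} [Fintype n] [DecidableEq n] [RCLike 𝕜]
    {U : Matrix n n 𝕜} (hU : U ∈ Matrix.unitaryGroup n 𝕜) (f : ι → n) (i : ι) :
    overlap (fun i v => U (f i) v) i i = 1 := by
  simpa only [overlap, sq] using sum_norm_sq_eq_one_of_mem_unitaryGroup hU (f i)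

lemma sum_overlap_erase_le {d n : ℕ} {ξ L : ℝ} (hξ : 0 < ξ) (hL : 1 ≤ L)
    {V : Finset (Fin d → ℤ)} {inp : Fin n → V} (hinj : Function.Injective inp) {R : Matrix V V ℂ}
    (hloc : ∀ j k : V, ‖R j k‖ ≤ exp (-(euclNormZ ((j : Fin d → ℤ) - (k : Fin d → ℤ))) / ξ))
    (hlat : ∀ i i' : Fin n, ∃ x : Fin d → ℤ, ∀ a : Fin d,
      ((inp i : Fin d → ℤ) a : ℝ) - (inp i' : Fin d → ℤ) a = 2 * L * x a) (i : Fin n) :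
    ∑ j ∈ univ.erase i, overlap (fun i v => R (inp i) v) i j ≤
      expLatticeSum d (ξ⁻¹ / 2) * (exp (ξ⁻¹ / 2) * expLatticeSum d (ξ⁻¹ / 2)) * exp (-L / ξ) := by
  set K := expLatticeSum d (ξ⁻¹ / 2)
  set p : Fin d → ℤ := (inp i : Fin d → ℤ)
  have hpair : ∀ j, overlap (fun i v => R (inp i) v) i j ≤
      exp (-(ξ⁻¹ / 2 * euclNormZ (p - (inp j : Fin d → ℤ)))) * K := fun j =>
    calc overlap (fun i v => R (inp i) v) i j
        ≤ ∑ v : V, exp (-(ξ⁻¹ * euclNormZ (p - (v : Fin d → ℤ)))) *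
            exp (-(ξ⁻¹ * euclNormZ ((inp j : Fin d → ℤ) - (v : Fin d → ℤ)))) :=
          sum_le_sum fun v _ => by
            simp only [← div_eq_inv_mul, ← neg_div]
            exact mul_le_mul (hloc _ v) (hloc _ v) (norm_nonneg _) (exp_pos _).le
      _ = ∑ v ∈ V, exp (-(ξ⁻¹ * euclNormZ (p - (v : Fin d → ℤ)))) *
            exp (-(ξ⁻¹ * euclNormZ ((inp j : Fin d → ℤ) - (v : Fin d → ℤ)))) :=
          sum_coe_sort V fun v =>
            exp (-(ξ⁻¹ * euclNormZ (p - v))) * exp (-(ξ⁻¹ * euclNormZ ((inp j : Fin d → ℤ) - v)))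
      _ ≤ _ := sum_exp_mul_exp_le (inv_pos.mpr hξ) V p _
  calc ∑ j ∈ univ.erase i, overlap (fun i v => R (inp i) v) i j
      ≤ ∑ j ∈ univ.erase i, exp (-(ξ⁻¹ / 2 * euclNormZ (p - (inp j : Fin d → ℤ)))) * K :=
        sum_le_sum fun j _ => hpair j
    _ = K * ∑ j ∈ univ.erase i, exp (-(ξ⁻¹ / 2 * euclNormZ (p - (inp j : Fin d → ℤ)))) := by
        rw [mul_sum]
        exact sum_congr rfl fun _ _ => mul_comm _ _
    _ ≤ K * (exp (-(ξ⁻¹ / 2 * (2 * L))) * (exp (ξ⁻¹ / 2) * K)) :=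
        mul_le_mul_of_nonneg_left
          (sum_exp_neg_mul_euclNormZ_sub_le (by positivity) (by linarith) p _ _
            (fun j _ j' _ h => hinj (Subtype.ext h))
            (fun j hj h => ne_of_mem_erase hj (hinj (Subtype.ext h))) fun j _ => hlat i j)
          (expLatticeSum_pos (by positivity)).le
    _ = _ := by
        rw [show -(ξ⁻¹ / 2 * (2 * L)) = -L / ξ by field_simp]
        ring

theorem stmt1_general (d : ℕ) (ξ : ℝ) (hξ : 0 < ξ) :
    ∃ C : ℝ, 0 < C ∧ ∃ L₀ : ℝ, 0 < L₀ ∧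
      ∀ (V : Finset (Fin d → ℤ)), V.Nonempty →
      ∀ n : ℕ, 2 ≤ n →
      ∀ inp : Fin n → ↥V, Function.Injective inp →
      ∀ R : Matrix ↥V ↥V ℂ, R ∈ Matrix.unitaryGroup ↥V ℂ →
      ∀ L : ℝ, 0 < L →
      (∀ j k : ↥V, ‖R j k‖ ≤
        Real.exp (-(euclNormZ ((j : Fin d → ℤ) - (k : Fin d → ℤ))) / ξ)) →
      (∀ i i' : Fin n, ∃ x : Fin d → ℤ, ∀ a : Fin d,
        (((inp i : Fin d → ℤ) a : ℝ) - ((inp i' : Fin d → ℤ) a : ℝ)) = 2 * L * (x a : ℝ)) →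
      L₀ ≤ L →
      (n : ℝ) * L ^ (d - 1) * Real.exp (-L / ξ) ≤ 1 →
      (1 / (2 * (n.factorial : ℝ))) *
        ∑ out : Fin n → ↥V,
          |‖∑ σ : Equiv.Perm (Fin n), ∏ i : Fin n, R (inp i) (out (σ i))‖ ^ 2
            - ∑ σ : Equiv.Perm (Fin n), ∏ i : Fin n, ‖R (inp i) (out (σ i))‖ ^ 2|
        ≤ C * (n : ℝ) ^ 2 * L ^ (2 * (d - 1)) * Real.exp (-(2 * L) / ξ) := by
  set K := expLatticeSum d (ξ⁻¹ / 2)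
  set M := K * (exp (ξ⁻¹ / 2) * K)
  have hM : 0 < M := by
    have := expLatticeSum_pos (d := d) (c := ξ⁻¹ / 2) (by positivity)
    positivity
  refine ⟨M ^ 2 * exp M / 2, by positivity, 1, one_pos, ?_⟩
  intro V _ n _ inp hinj R hR L _ hloc hlat hL hsmall
  set A : Fin n → V → ℂ := fun i v => R (inp i) v
  set T := ∑ i, ∑ j ∈ univ.erase i, overlap A i j
  have hT0 : 0 ≤ T := sum_nonneg fun i _ => sum_nonneg fun j _ => overlap_nonneg A i j
  have hTn : T ≤ n * (M * exp (-L / ξ)) :=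
    (sum_le_sum fun i _ => sum_overlap_erase_le hξ hL hinj hloc hlat i).trans_eq <| by
      rw [sum_const, card_univ, Fintype.card_fin, nsmul_eq_mul]
  have hTM : T ≤ M := hTn.trans <| by
    rw [mul_left_comm]
    refine mul_le_of_le_one_right hM.le (hsmall.trans' ?_)
    rw [mul_right_comm]
    exact le_mul_of_one_le_right (by positivity) (one_le_pow₀ hL)
  have hboson := sum_abs_norm_sum_perm_sq_sub_le A
  rw [Fintype.card_fin] at hboson
  have hperm : ∑ ρ ∈ univ.erase (1 : Equiv.Perm (Fin n)), ∏ i, overlap A i (ρ i) ≤ T ^ 2 * exp T :=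
    sum_prod_perm_ne_one_le (overlap_nonneg A) (overlap_self_of_mem_unitaryGroup hR inp)
  calc (1 / (2 * (n.factorial : ℝ))) * _
      ≤ 1 / (2 * n.factorial) * (n.factorial * (T ^ 2 * exp T)) := by gcongr; grw [hboson, hperm]
    _ = T ^ 2 * exp T / 2 := by field_simp
    _ ≤ (n * (M * exp (-L / ξ))) ^ 2 * exp M / 2 := by gcongr
    _ = M ^ 2 * exp M / 2 * n ^ 2 * exp (-(2 * L) / ξ) := by
        rw [mul_pow, mul_pow, sq (exp _), ← exp_add]
        ring_nf
    _ ≤ M ^ 2 * exp M / 2 * n ^ 2 * L ^ (2 * (d - 1)) * exp (-(2 * L) / ξ) :=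
        mul_le_mul_of_nonneg_right (le_mul_of_one_le_right (by positivity) (one_le_pow₀ hL))
          (exp_pos _).le

/-- Corollary 2: easiness of Anderson-localized systems.  Under the zero-velocity
Lieb–Robinson promise, the variation distance between the bosonic and the
distinguishable-particle output distributions is exponentially small for all times. -/
theorem stmt1 (d : ℕ) (hd : 1 ≤ d) (ξ : ℝ) (hξ : 0 < ξ) :
    ∃ C : ℝ, 0 < C ∧ ∃ L₀ : ℝ, 0 < L₀ ∧
      ∀ (V : Finset (Fin d → ℤ)), V.Nonempty →
      ∀ n : ℕ, 2 ≤ n →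
      ∀ inp : Fin n → ↥V, Function.Injective inp →
      ∀ R : Matrix ↥V ↥V ℂ, R ∈ Matrix.unitaryGroup ↥V ℂ →
      ∀ L : ℝ, 0 < L →
      (∀ j k : ↥V, ‖R j k‖ ≤
        Real.exp (-(euclNormZ ((j : Fin d → ℤ) - (k : Fin d → ℤ))) / ξ)) →
      (∀ i i' : Fin n, ∃ x : Fin d → ℤ, ∀ a : Fin d,
        (((inp i : Fin d → ℤ) a : ℝ) - ((inp i' : Fin d → ℤ) a : ℝ)) = 2 * L * (x a : ℝ)) →
      L₀ ≤ L →
      (n : ℝ) * L ^ (d - 1) * Real.exp (-L / ξ) ≤ 1 →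
      (1 / (2 * (n.factorial : ℝ))) *
        ∑ out : Fin n → ↥V,
          |‖∑ σ : Equiv.Perm (Fin n), ∏ i : Fin n, R (inp i) (out (σ i))‖ ^ 2
            - ∑ σ : Equiv.Perm (Fin n), ∏ i : Fin n, ‖R (inp i) (out (σ i))‖ ^ 2|
        ≤ C * (n : ℝ) ^ 2 * L ^ (2 * (d - 1)) * Real.exp (-(2 * L) / ξ) :=
  stmt1_general d ξ hξ
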